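/- arXiv:2305.19557 — 4 statements merged into one kernel-verified Lean document; each statement's English description precedes it below -/
import Mathlib

section
/- Every positive semidefinite Hermitian Toeplitz matrix X admits a Vandermonde decomposition X = V D V*, where V has columns of the form (1, e^{iθ}, e^{2iθ}, …, e^{(n-1)iθ})ᵀ for real angles θ, and D is diagonal with nonnegative entries. -/
open Matrix Complex
open scoped ComplexOrder

/-!
Write `X = gram f` with `f j ∈ ℂⁿ`. The Toeplitz condition says `⟪f (j+1), f (l+1)⟫ = ⟪f j, f l⟫`,
so `f j ↦ f (j+1)` extends to a unitary `U` of `ℂⁿ`, and `f j = U^j f 0`. Expanding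
`X j l = ⟪U^j f 0, U^l f 0⟫` in an orthonormal eigenbasis `b` of `U`, whose eigenvalues lie on the
unit circle, gives the Vandermonde decomposition with nodes the eigenvalues and weights
`|⟪f 0, b k⟫|²`.
-/

open Module Module.End
open scoped InnerProductSpace ComplexConjugate ComplexStarModule

theorem Matrix.PosSemidef.exists_eq_gram {𝕜 n : Type*} [RCLike 𝕜] [Fintype n]
    {A : Matrix n n 𝕜} (hA : A.PosSemidef) : ∃ v : n → EuclideanSpace 𝕜 n, A = gram 𝕜 v := by
  classical
  open scoped MatrixOrder in
  obtain ⟨B, rfl⟩ := CStarAlgebra.nonneg_iff_eq_star_mul_self.mp hA.nonneg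
  refine ⟨fun j => WithLp.toLp 2 fun i => B i j, ?_⟩
  ext j l
  simp [gram_apply, Matrix.mul_apply, PiLp.inner_apply, mul_comm]

section RCLike

variable {𝕜 E : Type*} [RCLike 𝕜] [NormedAddCommGroup E] [InnerProductSpace 𝕜 E]

theorem LinearMap.exists_linearIsometry_range_apply_eq {M : Type*} [AddCommGroup M] [Module 𝕜 M]
    {φ ψ : M →ₗ[𝕜] E} (h : ∀ c, ‖φ c‖ = ‖ψ c‖) :
    ∃ L : LinearMap.range φ →ₗᵢ[𝕜] E, ∀ c, L ⟨φ c, LinearMap.mem_range_self φ c⟩ = ψ c := by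
  have hker : LinearMap.ker φ ≤ LinearMap.ker ψ := fun c hc => by
    rw [LinearMap.mem_ker, ← norm_eq_zero, ← h, norm_eq_zero, ← LinearMap.mem_ker]
    exact hc
  set L := (LinearMap.ker φ).liftQ ψ hker ∘ₗ φ.quotKerEquivRange.symm.toLinearMap
  have hL : ∀ c, L ⟨φ c, LinearMap.mem_range_self φ c⟩ = ψ c := fun c => by
    have : φ.quotKerEquivRange.symm ⟨φ c, LinearMap.mem_range_self φ c⟩ =
        Submodule.Quotient.mk c :=
      φ.quotKerEquivRange.symm_apply_eq.mpr (Subtype.ext (φ.quotKerEquivRange_apply_mk c).symm)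
    simp [L, this]
  refine ⟨⟨L, ?_⟩, hL⟩
  rintro ⟨_, c, rfl⟩
  rw [hL, ← h]
  rfl

theorem LinearIsometryEquiv.inner_iterate_apply_of_symm_apply_eq_smul (U : E ≃ₗᵢ[𝕜] E) {w : E}
    {c : 𝕜} (hw : U.symm w = c • w) (x : E) (j : ℕ) : ⟪U^[j] x, w⟫_𝕜 = c ^ j * ⟪x, w⟫_𝕜 := by
  induction j with
  | zero => simp
  | succ j ih =>
    rw [Function.iterate_succ_apply', U.inner_map_eq_flip, hw, inner_smul_right, ih, pow_succ,
      mul_assoc, mul_left_comm]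

variable [FiniteDimensional 𝕜 E]

theorem exists_linearIsometryEquiv_apply_eq_of_inner_eq {ι : Type*} [Fintype ι] {v w : ι → E}
    (h : ∀ i j, ⟪v i, v j⟫_𝕜 = ⟪w i, w j⟫_𝕜) : ∃ U : E ≃ₗᵢ[𝕜] E, ∀ i, U (v i) = w i := by
  classical
  set φ := Fintype.linearCombination 𝕜 v
  set ψ := Fintype.linearCombination 𝕜 w
  have hinner : ∀ c c', ⟪φ c, φ c'⟫_𝕜 = ⟪ψ c, ψ c'⟫_𝕜 := fun c c' => by
    simp only [φ, ψ, Fintype.linearCombination_apply, sum_inner, inner_sum, inner_smul_left,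
      inner_smul_right, h]
  obtain ⟨L, hL⟩ := LinearMap.exists_linearIsometry_range_apply_eq (φ := φ) (ψ := ψ) fun c => by
    rw [@norm_eq_sqrt_re_inner 𝕜, @norm_eq_sqrt_re_inner 𝕜, hinner]
  refine ⟨L.extend.toLinearIsometryEquiv rfl, fun i => ?_⟩
  have hφ : φ (Pi.single i 1) = v i := by simp [φ]
  have hψ : ψ (Pi.single i 1) = w i := by simp [ψ]
  simpa [hφ, hψ] using (L.extend_apply ⟨φ (Pi.single i 1), LinearMap.mem_range_self φ _⟩).trans
    (hL (Pi.single i 1))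

theorem exists_linearIsometryEquiv_iterate_eq_of_inner_succ_eq {m : ℕ} {f : Fin (m + 1) → E}
    (hf : ∀ i j : Fin m, ⟪f i.succ, f j.succ⟫_𝕜 = ⟪f i.castSucc, f j.castSucc⟫_𝕜) :
    ∃ U : E ≃ₗᵢ[𝕜] E, ∀ k : Fin (m + 1), f k = U^[k] (f 0) := by
  obtain ⟨U, hU⟩ := exists_linearIsometryEquiv_apply_eq_of_inner_eq (fun i j => (hf i j).symm)
  refine ⟨U, Fin.induction rfl fun k ih => ?_⟩
  rw [Fin.val_succ, Function.iterate_succ_apply', ← Fin.val_castSucc, ← ih]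
  exact (hU k).symm

end RCLike

section Complex

variable {E : Type*} [NormedAddCommGroup E] [InnerProductSpace ℂ E] [FiniteDimensional ℂ E]
  {m : ℕ}

/-- `ℜ T` and `ℑ T` are commuting self-adjoint operators; a basis of their joint eigenvectors
diagonalises `T = ℜ T + I • ℑ T`. -/
theorem LinearMap.exists_orthonormalBasis_eigenvectors_of_isStarNormal
    (hm : finrank ℂ E = m) (T : E →ₗ[ℂ] E) [IsStarNormal T] :
    ∃ (b : OrthonormalBasis (Fin m) ℂ E) (μ : Fin m → ℂ), ∀ k, T (b k) = μ k • b k := by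
  classical
  have hA : (ℜ T : E →ₗ[ℂ] E).IsSymmetric := (isSymmetric_iff_isSelfAdjoint _).mpr (ℜ T).2
  have hB : (ℑ T : E →ₗ[ℂ] E).IsSymmetric := (isSymmetric_iff_isSelfAdjoint _).mpr (ℑ T).2
  set V := fun i : ℂ × ℂ => eigenspace (ℜ T : E →ₗ[ℂ] E) i.2 ⊓ eigenspace (ℑ T : E →ₗ[ℂ] E) i.1
  have hV : DirectSum.IsInternal V :=
    hA.directSum_isInternal_of_commute hB (Commute.realPart_imaginaryPart T)
  -- `subordinateOrthonormalBasis` needs a finite index type: keep the nonzero joint eigenspaces.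
  have := hV.submodule_iSupIndep.fintypeNeBotOfFiniteDimensional
  have hV₀ := DirectSum.isInternal_ne_bot_iff.mpr hV
  have hV₀' := (hA.orthogonalFamily_eigenspace_inf_eigenspace hB).comp
    (Subtype.val_injective (p := fun i => V i ≠ ⊥))
  refine ⟨hV₀.subordinateOrthonormalBasis hm hV₀', fun k =>
    (hV₀.subordinateOrthonormalBasisIndex hm k hV₀').1.2 +
      I * (hV₀.subordinateOrthonormalBasisIndex hm k hV₀').1.1, fun k => ?_⟩
  obtain ⟨hRe, hIm⟩ := Submodule.mem_inf.mp (hV₀.subordinateOrthonormalBasis_subordinate hm k hV₀')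
  conv_lhs => rw [← realPart_add_I_smul_imaginaryPart T]
  rw [LinearMap.add_apply, LinearMap.smul_apply, mem_eigenspace_iff.mp hRe,
    mem_eigenspace_iff.mp hIm, smul_smul, ← add_smul]

instance LinearIsometryEquiv.isStarNormal_toLinearMap (U : E ≃ₗᵢ[ℂ] E) :
    IsStarNormal (U.toLinearMap : E →ₗ[ℂ] E) := by
  refine ⟨?_⟩
  rw [LinearMap.star_eq_adjoint, U.adjoint_toLinearMap_eq_symm]
  ext x
  simp

theorem LinearIsometryEquiv.exists_orthonormalBasis_eigenvectors (hm : finrank ℂ E = m)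
    (U : E ≃ₗᵢ[ℂ] E) :
    ∃ (b : OrthonormalBasis (Fin m) ℂ E) (θ : Fin m → ℝ), ∀ k, U (b k) = exp (θ k * I) • b k := by
  obtain ⟨b, μ, hμ⟩ :=
    LinearMap.exists_orthonormalBasis_eigenvectors_of_isStarNormal hm (U.toLinearMap : E →ₗ[ℂ] E)
  refine ⟨b, fun k => arg (μ k), fun k => ?_⟩
  have hnorm : ‖μ k‖ = 1 := by
    simpa [b.orthonormal.1 k, norm_smul] using (congrArg norm (hμ k)).symm
  have hexp : exp (arg (μ k) * I) = μ k := by simpa [hnorm] using norm_mul_exp_arg_mul_I (μ k)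
  rw [hexp]
  exact hμ k

theorem LinearIsometryEquiv.exists_inner_iterate_eq_sum (hm : finrank ℂ E = m)
    (U : E ≃ₗᵢ[ℂ] E) (x : E) :
    ∃ (θ d : Fin m → ℝ), (∀ k, 0 ≤ d k) ∧ ∀ j l : ℕ,
      ⟪U^[j] x, U^[l] x⟫_ℂ = ∑ k, exp (I * j * θ k) * d k * conj (exp (I * l * θ k)) := by
  -- Diagonalising `U.symm` rather than `U` makes `⟪U y, b k⟫` pick up the eigenvalue itself
  -- instead of its conjugate.
  obtain ⟨b, θ, hθ⟩ := U.symm.exists_orthonormalBasis_eigenvectors hm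
  have hpow : ∀ j : ℕ, ∀ k, ⟪U^[j] x, b k⟫_ℂ = exp (I * j * θ k) * ⟪x, b k⟫_ℂ := fun j k => by
    rw [U.inner_iterate_apply_of_symm_apply_eq_smul (hθ k), ← exp_nat_mul]
    ring_nf
  refine ⟨θ, fun k => normSq ⟪x, b k⟫_ℂ, fun k => normSq_nonneg _, fun j l => ?_⟩
  rw [← b.sum_inner_mul_inner]
  refine Finset.sum_congr rfl fun k _ => ?_
  rw [← inner_conj_symm (b k), hpow, hpow, map_mul, ← mul_conj]
  ring

end Complex

/-- Every PSD Hermitian Toeplitz matrix `X` admits a Vandermonde decomposition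
`X = V D Vᴴ` where the columns of `V` are of the form `(1, e^{iθ}, …, e^{(n-1)iθ})ᵀ`
and `D` is diagonal with nonnegative entries. -/
theorem stmt1 {n : ℕ} (X : Matrix (Fin n) (Fin n) ℂ)
    (hToep : ∀ i j i' j' : Fin n, (i : ℤ) - (j : ℤ) = (i' : ℤ) - (j' : ℤ) → X i j = X i' j')
    (hPSD : X.PosSemidef) :
    ∃ (θ : Fin n → ℝ) (d : Fin n → ℝ), (∀ k, 0 ≤ d k) ∧
      X = (Matrix.of fun (i k : Fin n) => Complex.exp (Complex.I * ((i : ℕ) : ℂ) * ((θ k : ℝ) : ℂ)))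
            * Matrix.diagonal (fun k => ((d k : ℝ) : ℂ))
            * (Matrix.of fun (i k : Fin n) => Complex.exp (Complex.I * ((i : ℕ) : ℂ) * ((θ k : ℝ) : ℂ)))ᴴ := by
  cases n with
  | zero => exact ⟨0, 0, fun _ => le_rfl, Subsingleton.elim _ _⟩
  | succ m =>
    obtain ⟨f, rfl⟩ := hPSD.exists_eq_gram
    obtain ⟨U, hU⟩ := exists_linearIsometryEquiv_iterate_eq_of_inner_succ_eq (f := f) fun i j =>
      hToep i.succ j.succ i.castSucc j.castSucc (by simp)
    obtain ⟨θ, d, hd, hθ⟩ := U.exists_inner_iterate_eq_sum finrank_euclideanSpace_fin (f 0)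
    refine ⟨θ, d, hd, ?_⟩
    ext j l
    rw [gram_apply, hU j, hU l, hθ, Matrix.mul_apply]
    simp only [mul_diagonal, conjTranspose_apply, of_apply, RCLike.star_def]
end

section
/- Every pure tensor product of moment vectors v^{(j₁)}(θ₁) ⊗ ⋯ ⊗ v^{(j_r)}(θ_r) lies in the set C_BlockToep of tensors z such that z = Z_{*,…,*,0,…,0} for some positive semidefinite Hermitian block Toeplitz tensor Z with all 'diagonal' entries Z_{x₁,…,x_r,x₁,…,x_r} equal to 1; consequently the convex hull of all such pure tensors is contained in C_BlockToep. -/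
/-! The pure tensor `w = v^{(j₁)}(θ₁) ⊗ ⋯ ⊗ v^{(j_r)}(θ_r)` has entries `w x = ∏ₖ e^{i xₖ θₖ}`, so the
rank-one matrix `Z = w w*` is positive semidefinite with `Z x y = ∏ₖ e^{i (xₖ - yₖ) θₖ}`. This depends
only on `x - y`, equals `1` on the diagonal, and its column `y = 0` is `w` itself. The convex hull
statement follows because the defining conditions of `C_BlockToep` are preserved under convex
combinations of the witnesses `Z`. -/

open Matrix Complex
open scoped ComplexOrder BigOperators

noncomputable section

/-- A tensor of size `n₁×⋯×n_r × n₁×⋯×n_r` (viewed as a matrix indexed by multi-indices)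
is (Hermitian) block Toeplitz: its entries depend only on the coordinatewise differences of
the multi-indices. -/
def IsBlockToeplitz {r : ℕ} {j : Fin r → ℕ}
    (Z : Matrix (∀ k, Fin (j k + 1)) (∀ k, Fin (j k + 1)) ℂ) : Prop :=
  ∀ x y x' y' : ∀ k, Fin (j k + 1),
    (∀ k, ((x k : ℤ) - (y k : ℤ)) = ((x' k : ℤ) - (y' k : ℤ))) → Z x y = Z x' y'

/-- The block-Toeplitz relaxation `C_BlockToep` of the multivariate Carathéodory orbitope:
tensors arising as the slice `Z_{*,…,*,0,…,0}` of a PSD Hermitian block Toeplitz tensor `Z`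
with all diagonal entries equal to `1`. -/
def CBlockToep (r : ℕ) (j : Fin r → ℕ) : Set ((∀ k, Fin (j k + 1)) → ℂ) :=
  {z | ∃ Z : Matrix (∀ k, Fin (j k + 1)) (∀ k, Fin (j k + 1)) ℂ,
    Z.PosSemidef ∧ IsBlockToeplitz Z ∧ (∀ x, Z x x = 1) ∧
    z = fun x => Z x (fun _ => 0)}

section

variable {r : ℕ} {j : Fin r → ℕ}

def momentTensor (θ : Fin r → ℝ) : (∀ k, Fin (j k + 1)) → ℂ :=
  fun x => ∏ k, exp (I * ((x k : ℕ) : ℂ) * (θ k : ℂ))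

lemma momentTensor_mul_star (θ : Fin r → ℝ) (x y : ∀ k, Fin (j k + 1)) :
    momentTensor θ x * star (momentTensor θ y) =
      ∏ k, exp (I * (((x k : ℤ) - (y k : ℤ) : ℤ) : ℂ) * (θ k : ℂ)) := by
  simp only [momentTensor, star_prod, ← Finset.prod_mul_distrib]
  refine Finset.prod_congr rfl fun k _ => ?_
  rw [star_def, ← exp_conj, ← exp_add]
  simp only [map_mul, conj_I, conj_ofReal, map_natCast]
  push_cast
  ring_nf

lemma isBlockToeplitz_vecMulVec_momentTensor (θ : Fin r → ℝ) :
    IsBlockToeplitz (vecMulVec (momentTensor (j := j) θ) (star (momentTensor θ))) := by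
  intro x y x' y' h
  simp only [vecMulVec_apply, Pi.star_apply, momentTensor_mul_star, h]

lemma momentTensor_mem_cBlockToep (θ : Fin r → ℝ) : momentTensor θ ∈ CBlockToep r j := by
  refine ⟨_, posSemidef_vecMulVec_self_star _, isBlockToeplitz_vecMulVec_momentTensor θ,
    fun x => ?_, funext fun x => ?_⟩
  all_goals rw [vecMulVec_apply, Pi.star_apply, momentTensor_mul_star]
  · simp
  · simp [momentTensor]

lemma IsBlockToeplitz.add {Z W : Matrix (∀ k, Fin (j k + 1)) (∀ k, Fin (j k + 1)) ℂ}
    (hZ : IsBlockToeplitz Z) (hW : IsBlockToeplitz W) : IsBlockToeplitz (Z + W) :=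
  fun x y x' y' h => by simp only [Matrix.add_apply, hZ x y x' y' h, hW x y x' y' h]

lemma IsBlockToeplitz.smul {R : Type*} [SMul R ℂ]
    {Z : Matrix (∀ k, Fin (j k + 1)) (∀ k, Fin (j k + 1)) ℂ} (hZ : IsBlockToeplitz Z) (c : R) :
    IsBlockToeplitz (c • Z) :=
  fun x y x' y' h => by simp only [Matrix.smul_apply, hZ x y x' y' h]

end

lemma convex_cBlockToep (r : ℕ) (j : Fin r → ℕ) : Convex ℝ (CBlockToep r j) := by
  rintro _ ⟨Z, hZpsd, hZtoep, hZdiag, rfl⟩ _ ⟨W, hWpsd, hWtoep, hWdiag, rfl⟩ a b ha hb hab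
  refine ⟨a • Z + b • W, (hZpsd.smul ha).add (hWpsd.smul hb),
    (hZtoep.smul a).add (hWtoep.smul b), fun x => ?_, rfl⟩
  simp only [Matrix.add_apply, Matrix.smul_apply, hZdiag, hWdiag, real_smul, mul_one]
  exact_mod_cast hab

/-- Every pure tensor product of moment vectors lies in `C_BlockToep`; consequently the
convex hull of all such pure tensors is contained in `C_BlockToep`. -/
theorem stmt4 (r : ℕ) (j : Fin r → ℕ) :
    (∀ θ : Fin r → ℝ, (∀ k, θ k ∈ Set.Ico (0 : ℝ) (2 * Real.pi)) →
      (fun x : ∀ k, Fin (j k + 1) =>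
          ∏ k, Complex.exp (Complex.I * ((x k : ℕ) : ℂ) * ((θ k : ℝ) : ℂ))) ∈ CBlockToep r j) ∧
    convexHull ℝ {v : (∀ k, Fin (j k + 1)) → ℂ |
        ∃ θ : Fin r → ℝ, (∀ k, θ k ∈ Set.Ico (0 : ℝ) (2 * Real.pi)) ∧
          v = fun x => ∏ k, Complex.exp (Complex.I * ((x k : ℕ) : ℂ) * ((θ k : ℝ) : ℂ))}
      ⊆ CBlockToep r j := by
  refine ⟨fun θ _ => momentTensor_mem_cBlockToep θ, convexHull_min ?_ (convex_cBlockToep r j)⟩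
  rintro _ ⟨θ, -, rfl⟩
  exact momentTensor_mem_cBlockToep θ
end
end

section
/- With the notation of the band-limited dictionary learning problem, if Ĥ_k ⊆ Ĝ is an increasing sequence of irreducibles with ∪_k Ĥ_k = Ĝ, then OPT-Ĥ_k increases monotonically to OPT-Ĝ. -/
/-!
Enlarging the set of blocks only adds nonnegative terms to the band-limited objective and adds
constraints to the infimum defining `‖·‖⁺_S`, so `OPT-Ĥ` is monotone in `Ĥ`, and it is bounded by
`OPT-Ĝ` since the band-limited objective of a pair is dominated by its full objective. Conversely,
a band-limited pair `(φ, ℓ)` extends to all of `Ĝ`: set `φ` to zero off `Ĥ` and replace each `ℓᵢⱼ`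
by a near-optimal extension from the infimum defining `‖ℓᵢⱼ‖⁺_Ĥ`. Off `Ĥ` the residual is then the
data itself, so the full objective exceeds the band-limited one by little more than the energy
`ε(Ĥ)` of the data outside `Ĥ`. Thus `OPT-Ĝ - ε(Ĥₖ) ≤ OPT-Ĥₖ ≤ OPT-Ĝ`, and `ε(Ĥₖ) → 0` as the data
has finite energy.
-/

open Matrix Filter
open scoped BigOperators Topology

noncomputable section

/-- Squared Frobenius norm of a complex matrix. -/
def frobSq {a b : Type*} [Fintype a] [Fintype b] (M : Matrix a b ℂ) : ℝ :=
  ∑ i, ∑ j, ‖M i j‖ ^ 2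

/-- Block-diagonal operators indexed by the irreducibles `I`. -/
def Op (I : Type*) (d : I → ℕ) := ∀ ξ : I, Matrix (Fin (d ξ)) (Fin (d ξ)) ℂ

/-- Projection onto the blocks indexed by a finite set `S`. -/
def projS {I : Type*} [DecidableEq I] {d : I → ℕ} (S : Finset I) (t : Op I d) : Op I d :=
  fun ξ => if ξ ∈ S then t ξ else 0

/-- The projected atomic norm `‖t‖⁺_S = inf {‖z‖_Ĝ : z agrees with t on S}`. -/
def normPlus {I : Type*} {d : I → ℕ} (normG : Op I d → ℝ) (S : Finset I) (t : Op I d) : ℝ :=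
  sInf {r : ℝ | ∃ z : Op I d, (∀ ξ ∈ S, z ξ = t ξ) ∧ r = normG z}

/-- The residual `ŷ_ξ − Σⱼ φ̂_{j,ξ} ℓ_{j,ξ}*` of data point `i` at block `ξ`. -/
def resid {I : Type*} {d : I → ℕ} {n q : ℕ} (y : Fin n → Op I d)
    (φ : Fin q → Op I d) (ℓ : Fin n → Fin q → Op I d) (i : Fin n) (ξ : I) :
    Matrix (Fin (d ξ)) (Fin (d ξ)) ℂ :=
  y i ξ - ∑ j, φ j ξ * (ℓ i j ξ)ᴴ

/-- The band-limited Lagrangian dictionary learning objective over the blocks in `S`. -/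
def objFin {I : Type*} [DecidableEq I] {d : I → ℕ} {n q : ℕ}
    (normG : Op I d → ℝ) (lam : ℝ) (mu : Fin q → ℝ) (y : Fin n → Op I d)
    (S : Finset I) (φ : Fin q → Op I d) (ℓ : Fin n → Fin q → Op I d) : ℝ :=
  (∑ i, ((∑ ξ ∈ S, ((d ξ : ℝ)) ^ 2 / 2 * frobSq (resid y φ ℓ i ξ))
      + lam * ∑ j, normPlus normG S (projS S (ℓ i j))))
    + ∑ j, mu j * ∑ ξ ∈ S, ((d ξ : ℝ)) ^ 2 * frobSq (φ j ξ)

/-- `OPT-Ĥ`: the optimal value of the band-limited problem over the blocks in `S`. -/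
def OPTFin {I : Type*} [DecidableEq I] {d : I → ℕ} {n q : ℕ}
    (normG : Op I d → ℝ) (lam : ℝ) (mu : Fin q → ℝ) (y : Fin n → Op I d)
    (S : Finset I) : ℝ :=
  sInf {v : ℝ | ∃ (φ : Fin q → Op I d) (ℓ : Fin n → Fin q → Op I d),
      v = objFin normG lam mu y S φ ℓ}

/-- The full Lagrangian dictionary learning objective over all blocks of `Ĝ`. -/
def objFull {I : Type*} {d : I → ℕ} {n q : ℕ}
    (normG : Op I d → ℝ) (lam : ℝ) (mu : Fin q → ℝ) (y : Fin n → Op I d)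
    (φ : Fin q → Op I d) (ℓ : Fin n → Fin q → Op I d) : ℝ :=
  (∑ i, ((∑' ξ : I, ((d ξ : ℝ)) ^ 2 / 2 * frobSq (resid y φ ℓ i ξ))
      + lam * ∑ j, normG (ℓ i j)))
    + ∑ j, mu j * ∑' ξ : I, ((d ξ : ℝ)) ^ 2 * frobSq (φ j ξ)

/-- `OPT-Ĝ`: the optimal value of the full problem (over solutions with finite objective). -/
def OPTFull {I : Type*} {d : I → ℕ} {n q : ℕ}
    (normG : Op I d → ℝ) (lam : ℝ) (mu : Fin q → ℝ) (y : Fin n → Op I d) : ℝ :=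
  sInf {v : ℝ | ∃ (φ : Fin q → Op I d) (ℓ : Fin n → Fin q → Op I d),
      (∀ i, Summable fun ξ : I => ((d ξ : ℝ)) ^ 2 / 2 * frobSq (resid y φ ℓ i ξ)) ∧
      (∀ j, Summable fun ξ : I => ((d ξ : ℝ)) ^ 2 * frobSq (φ j ξ)) ∧
      v = objFull normG lam mu y φ ℓ}


theorem hasSum_of_eq_off_finset {α G : Type*} [AddCommGroup G] [TopologicalSpace G]
    [IsTopologicalAddGroup G] {f g : α → G} {a : G} (S : Finset α) (hg : HasSum g a)
    (hfg : ∀ x ∉ S, f x = g x) : HasSum f ((a - ∑ x ∈ S, g x) + ∑ x ∈ S, f x) := by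
  rw [← S.hasSum_compl_iff]
  have hg' : HasSum (fun x : {x // x ∉ S} => g x) (a - ∑ x ∈ S, g x) :=
    (S.hasSum_compl_iff).2 (by rwa [sub_add_cancel])
  exact hg'.congr_fun fun x => hfg x x.2

section

variable {I : Type*} {d : I → ℕ} {n q : ℕ}

theorem frobSq_nonneg {a b : Type*} [Fintype a] [Fintype b] (M : Matrix a b ℂ) :
    0 ≤ frobSq M := by
  unfold frobSq; positivity

@[simp]
theorem frobSq_zero {a b : Type*} [Fintype a] [Fintype b] : frobSq (0 : Matrix a b ℂ) = 0 := by
  simp [frobSq]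

section NormPlus

variable (normG : Op I d → ℝ)

theorem bddBelow_normPlus (hnG : ∀ z, 0 ≤ normG z) (S : Finset I) (t : Op I d) :
    BddBelow {r : ℝ | ∃ z : Op I d, (∀ ξ ∈ S, z ξ = t ξ) ∧ r = normG z} :=
  ⟨0, by rintro _ ⟨z, -, rfl⟩; exact hnG z⟩

theorem normPlus_nonneg (hnG : ∀ z, 0 ≤ normG z) (S : Finset I) (t : Op I d) :
    0 ≤ normPlus normG S t :=
  Real.sInf_nonneg (by rintro _ ⟨z, -, rfl⟩; exact hnG z)

theorem normPlus_le (hnG : ∀ z, 0 ≤ normG z) {S : Finset I} {t z : Op I d}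
    (hz : ∀ ξ ∈ S, z ξ = t ξ) : normPlus normG S t ≤ normG z :=
  csInf_le (bddBelow_normPlus normG hnG S t) ⟨z, hz, rfl⟩

theorem normPlus_mono (hnG : ∀ z, 0 ≤ normG z) {S S' : Finset I} (hSS : S ⊆ S') (t : Op I d) :
    normPlus normG S t ≤ normPlus normG S' t :=
  csInf_le_csInf (bddBelow_normPlus normG hnG S t) ⟨_, t, fun _ _ => rfl, rfl⟩
    (by rintro _ ⟨z, hz, rfl⟩; exact ⟨z, fun ξ hξ => hz ξ (hSS hξ), rfl⟩)

theorem normPlus_projS [DecidableEq I] (S : Finset I) (t : Op I d) :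
    normPlus normG S (projS S t) = normPlus normG S t := by
  simp +contextual [normPlus, projS]

theorem exists_seq_tendsto_normPlus (hnG : ∀ z, 0 ≤ normG z) (S : Finset I) (t : Op I d) :
    ∃ z : ℕ → Op I d, (∀ m, ∀ ξ ∈ S, z m ξ = t ξ) ∧
      Tendsto (fun m => normG (z m)) atTop (𝓝 (normPlus normG S t)) := by
  obtain ⟨u, -, hu, hmem⟩ :=
    exists_seq_tendsto_sInf (S := {r : ℝ | ∃ z : Op I d, (∀ ξ ∈ S, z ξ = t ξ) ∧ r = normG z})
      ⟨_, t, fun _ _ => rfl, rfl⟩ (bddBelow_normPlus normG hnG S t)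
  choose z hz hzu using hmem
  exact ⟨z, hz, hu.congr hzu⟩

end NormPlus

variable (normG : Op I d → ℝ) (lam : ℝ) (mu : Fin q → ℝ) (y : Fin n → Op I d)

theorem summable_energy (hsum : ∀ i, Summable fun ξ : I => ((d ξ : ℝ)) ^ 2 * frobSq (y i ξ))
    (i : Fin n) : Summable fun ξ : I => ((d ξ : ℝ)) ^ 2 / 2 * frobSq (y i ξ) :=
  ((hsum i).div_const 2).congr fun ξ => by ring

/-- `Σᵢ ε⁽ⁱ⁾` of the paper: the energy of the data outside the blocks in `S`. -/
def tailEnergy (y : Fin n → Op I d) (S : Finset I) : ℝ :=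
  ∑ i, ((∑' ξ, ((d ξ : ℝ)) ^ 2 / 2 * frobSq (y i ξ))
    - ∑ ξ ∈ S, ((d ξ : ℝ)) ^ 2 / 2 * frobSq (y i ξ))

theorem tendsto_tailEnergy (hsum : ∀ i, Summable fun ξ : I => ((d ξ : ℝ)) ^ 2 * frobSq (y i ξ)) :
    Tendsto (tailEnergy y) atTop (𝓝 0) := by
  have hlim : ∀ i, Tendsto (fun S : Finset I => ∑ ξ ∈ S, ((d ξ : ℝ)) ^ 2 / 2 * frobSq (y i ξ))
      atTop (𝓝 (∑' ξ, ((d ξ : ℝ)) ^ 2 / 2 * frobSq (y i ξ))) := fun i =>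
    (summable_energy y hsum i).hasSum
  have := tendsto_finsetSum Finset.univ fun i _ =>
    (hlim i).const_sub (∑' ξ, ((d ξ : ℝ)) ^ 2 / 2 * frobSq (y i ξ))
  simp only [sub_self, Finset.sum_const_zero] at this
  exact this

theorem objFull_nonneg (hnG : ∀ z, 0 ≤ normG z) (hlam : 0 ≤ lam) (hmu : ∀ j, 0 ≤ mu j)
    (φ : Fin q → Op I d) (ℓ : Fin n → Fin q → Op I d) : 0 ≤ objFull normG lam mu y φ ℓ := by
  unfold objFull
  refine add_nonneg (Finset.sum_nonneg fun i _ => add_nonneg (tsum_nonneg fun ξ => ?_)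
    (mul_nonneg hlam (Finset.sum_nonneg fun j _ => hnG _)))
    (Finset.sum_nonneg fun j _ => mul_nonneg (hmu j) (tsum_nonneg fun ξ => ?_))
  all_goals exact mul_nonneg (by positivity) (frobSq_nonneg _)

theorem OPTFull_le_objFull (hnG : ∀ z, 0 ≤ normG z) (hlam : 0 ≤ lam) (hmu : ∀ j, 0 ≤ mu j)
    {φ : Fin q → Op I d} {ℓ : Fin n → Fin q → Op I d}
    (hres : ∀ i, Summable fun ξ : I => ((d ξ : ℝ)) ^ 2 / 2 * frobSq (resid y φ ℓ i ξ))
    (hdict : ∀ j, Summable fun ξ : I => ((d ξ : ℝ)) ^ 2 * frobSq (φ j ξ)) :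
    OPTFull normG lam mu y ≤ objFull normG lam mu y φ ℓ :=
  csInf_le ⟨0, by rintro _ ⟨φ, ℓ, -, -, rfl⟩; exact objFull_nonneg normG lam mu y hnG hlam hmu φ ℓ⟩
    ⟨φ, ℓ, hres, hdict, rfl⟩

section DecidableEq

variable [DecidableEq I]

theorem objFin_nonneg (hnG : ∀ z, 0 ≤ normG z) (hlam : 0 ≤ lam) (hmu : ∀ j, 0 ≤ mu j)
    (S : Finset I) (φ : Fin q → Op I d) (ℓ : Fin n → Fin q → Op I d) :
    0 ≤ objFin normG lam mu y S φ ℓ := by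
  unfold objFin
  refine add_nonneg (Finset.sum_nonneg fun i _ => add_nonneg (Finset.sum_nonneg fun ξ _ => ?_)
    (mul_nonneg hlam (Finset.sum_nonneg fun j _ => normPlus_nonneg normG hnG _ _)))
    (Finset.sum_nonneg fun j _ => mul_nonneg (hmu j) (Finset.sum_nonneg fun ξ _ => ?_))
  all_goals exact mul_nonneg (by positivity) (frobSq_nonneg _)

theorem objFin_mono (hnG : ∀ z, 0 ≤ normG z) (hlam : 0 ≤ lam) (hmu : ∀ j, 0 ≤ mu j)
    {S S' : Finset I} (hSS : S ⊆ S') (φ : Fin q → Op I d) (ℓ : Fin n → Fin q → Op I d) :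
    objFin normG lam mu y S φ ℓ ≤ objFin normG lam mu y S' φ ℓ := by
  unfold objFin
  simp only [normPlus_projS]
  gcongr with i _ j _ j
  · exact fun ξ _ _ => mul_nonneg (by positivity) (frobSq_nonneg _)
  · exact normPlus_mono normG hnG hSS _
  · exact hmu j
  · exact fun ξ _ _ => mul_nonneg (by positivity) (frobSq_nonneg _)

theorem OPTFin_le_objFin (hnG : ∀ z, 0 ≤ normG z) (hlam : 0 ≤ lam) (hmu : ∀ j, 0 ≤ mu j)
    (S : Finset I) (φ : Fin q → Op I d) (ℓ : Fin n → Fin q → Op I d) :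
    OPTFin normG lam mu y S ≤ objFin normG lam mu y S φ ℓ :=
  csInf_le ⟨0, by rintro _ ⟨φ, ℓ, rfl⟩; exact objFin_nonneg normG lam mu y hnG hlam hmu S φ ℓ⟩
    ⟨φ, ℓ, rfl⟩

theorem OPTFin_mono (hnG : ∀ z, 0 ≤ normG z) (hlam : 0 ≤ lam) (hmu : ∀ j, 0 ≤ mu j)
    {S S' : Finset I} (hSS : S ⊆ S') : OPTFin normG lam mu y S ≤ OPTFin normG lam mu y S' :=
  le_csInf ⟨_, fun _ _ => 0, fun _ _ _ => 0, rfl⟩ fun _ ⟨φ, ℓ, hv⟩ =>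
    hv ▸ (OPTFin_le_objFin normG lam mu y hnG hlam hmu S φ ℓ).trans
      (objFin_mono normG lam mu y hnG hlam hmu hSS φ ℓ)

theorem objFin_le_objFull (hnG : ∀ z, 0 ≤ normG z) (hlam : 0 ≤ lam) (hmu : ∀ j, 0 ≤ mu j)
    {φ : Fin q → Op I d} {ℓ : Fin n → Fin q → Op I d}
    (hres : ∀ i, Summable fun ξ : I => ((d ξ : ℝ)) ^ 2 / 2 * frobSq (resid y φ ℓ i ξ))
    (hdict : ∀ j, Summable fun ξ : I => ((d ξ : ℝ)) ^ 2 * frobSq (φ j ξ)) (S : Finset I) :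
    objFin normG lam mu y S φ ℓ ≤ objFull normG lam mu y φ ℓ := by
  unfold objFin objFull
  gcongr with i _ j _ j
  · exact (hres i).sum_le_tsum S fun ξ _ => mul_nonneg (by positivity) (frobSq_nonneg _)
  · exact normPlus_le normG hnG fun ξ hξ => by simp [projS, hξ]
  · exact hmu j
  · exact (hdict j).sum_le_tsum S fun ξ _ => mul_nonneg (by positivity) (frobSq_nonneg _)

theorem OPTFin_le_OPTFull (hnG : ∀ z, 0 ≤ normG z) (hlam : 0 ≤ lam) (hmu : ∀ j, 0 ≤ mu j)
    (hsum : ∀ i, Summable fun ξ : I => ((d ξ : ℝ)) ^ 2 * frobSq (y i ξ)) (S : Finset I) :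
    OPTFin normG lam mu y S ≤ OPTFull normG lam mu y := by
  have hzero : ∀ i ξ, resid (q := q) y (fun _ _ => 0) (fun _ _ _ => 0) i ξ = y i ξ := by
    simp [resid]
  refine le_csInf ⟨_, fun _ _ => 0, fun _ _ _ => 0, fun i => ?_, fun j => ?_, rfl⟩ ?_
  · simpa only [hzero] using summable_energy y hsum i
  · simp
  · rintro _ ⟨φ, ℓ, hres, hdict, rfl⟩
    exact (OPTFin_le_objFin normG lam mu y hnG hlam hmu S φ ℓ).trans
      (objFin_le_objFull normG lam mu y hnG hlam hmu hres hdict S)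

theorem hasSum_projS (S : Finset I) (t : Op I d) :
    HasSum (fun ξ => ((d ξ : ℝ)) ^ 2 * frobSq (projS S t ξ))
      (∑ ξ ∈ S, ((d ξ : ℝ)) ^ 2 * frobSq (t ξ)) := by
  have hS : ∑ ξ ∈ S, ((d ξ : ℝ)) ^ 2 * frobSq (projS S t ξ)
      = ∑ ξ ∈ S, ((d ξ : ℝ)) ^ 2 * frobSq (t ξ) :=
    Finset.sum_congr rfl fun ξ hξ => by rw [projS, if_pos hξ]
  exact hS ▸ hasSum_sum_of_ne_finset_zero fun ξ hξ => by simp [projS, hξ]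

section Extension

variable {S : Finset I} {φ : Fin q → Op I d} {ℓ z : Fin n → Fin q → Op I d}

theorem resid_projS (hz : ∀ i j, ∀ ξ ∈ S, z i j ξ = ℓ i j ξ) (i : Fin n) (ξ : I) :
    resid y (fun j => projS S (φ j)) z i ξ = if ξ ∈ S then resid y φ ℓ i ξ else y i ξ := by
  by_cases hξ : ξ ∈ S <;> simp [resid, projS, hξ, hz _ _ ξ]

theorem hasSum_resid_projS (hsum : ∀ i, Summable fun ξ : I => ((d ξ : ℝ)) ^ 2 * frobSq (y i ξ))
    (hz : ∀ i j, ∀ ξ ∈ S, z i j ξ = ℓ i j ξ) (i : Fin n) :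
    HasSum (fun ξ => ((d ξ : ℝ)) ^ 2 / 2 * frobSq (resid y (fun j => projS S (φ j)) z i ξ))
      ((∑' ξ, ((d ξ : ℝ)) ^ 2 / 2 * frobSq (y i ξ)) - ∑ ξ ∈ S, ((d ξ : ℝ)) ^ 2 / 2 * frobSq (y i ξ)
        + ∑ ξ ∈ S, ((d ξ : ℝ)) ^ 2 / 2 * frobSq (resid y φ ℓ i ξ)) := by
  have := hasSum_of_eq_off_finset S (summable_energy y hsum i).hasSum
    (f := fun ξ => ((d ξ : ℝ)) ^ 2 / 2 * frobSq (resid y (fun j => projS S (φ j)) z i ξ))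
    fun ξ hξ => by rw [resid_projS y hz, if_neg hξ]
  have hS : ∑ ξ ∈ S, ((d ξ : ℝ)) ^ 2 / 2 * frobSq (resid y (fun j => projS S (φ j)) z i ξ)
      = ∑ ξ ∈ S, ((d ξ : ℝ)) ^ 2 / 2 * frobSq (resid y φ ℓ i ξ) :=
    Finset.sum_congr rfl fun ξ hξ => by rw [resid_projS y hz, if_pos hξ]
  rwa [hS] at this

theorem objFull_projS_add (hsum : ∀ i, Summable fun ξ : I => ((d ξ : ℝ)) ^ 2 * frobSq (y i ξ))
    (hz : ∀ i j, ∀ ξ ∈ S, z i j ξ = ℓ i j ξ) :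
    objFull normG lam mu y (fun j => projS S (φ j)) z + lam * ∑ i, ∑ j, normPlus normG S (ℓ i j)
      = objFin normG lam mu y S φ ℓ + tailEnergy y S + lam * ∑ i, ∑ j, normG (z i j) := by
  unfold objFull objFin tailEnergy
  simp only [(hasSum_resid_projS y hsum hz _).tsum_eq, (hasSum_projS _ _).tsum_eq, normPlus_projS,
    Finset.sum_add_distrib, Finset.mul_sum]
  ring

end Extension

theorem OPTFull_le_objFin_add_tailEnergy (hnG : ∀ z, 0 ≤ normG z) (hlam : 0 ≤ lam)
    (hmu : ∀ j, 0 ≤ mu j) (hsum : ∀ i, Summable fun ξ : I => ((d ξ : ℝ)) ^ 2 * frobSq (y i ξ))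
    (S : Finset I) (φ : Fin q → Op I d) (ℓ : Fin n → Fin q → Op I d) :
    OPTFull normG lam mu y ≤ objFin normG lam mu y S φ ℓ + tailEnergy y S := by
  -- the infimum defining `‖ℓᵢⱼ‖⁺_S` need not be attained: pass to the limit along extensions
  choose z hz hlim using fun i j => exists_seq_tendsto_normPlus normG hnG S (ℓ i j)
  set P := lam * ∑ i, ∑ j, normPlus normG S (ℓ i j)
  have hle : ∀ m, OPTFull normG lam mu y
      ≤ objFin normG lam mu y S φ ℓ + tailEnergy y S + lam * ∑ i, ∑ j, normG (z i j m) - P := by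
    intro m
    have hzm : ∀ i j, ∀ ξ ∈ S, z i j m ξ = ℓ i j ξ := fun i j => hz i j m
    rw [← objFull_projS_add normG lam mu y hsum hzm, add_sub_cancel_right]
    exact OPTFull_le_objFull normG lam mu y hnG hlam hmu
      (fun i => (hasSum_resid_projS y hsum hzm i).summable) fun j => (hasSum_projS S _).summable
  have hconv : Tendsto (fun m => objFin normG lam mu y S φ ℓ + tailEnergy y S
      + lam * ∑ i, ∑ j, normG (z i j m) - P) atTop
      (𝓝 (objFin normG lam mu y S φ ℓ + tailEnergy y S + P - P)) :=
    (((tendsto_finsetSum _ fun i _ => tendsto_finsetSum _ fun j _ => hlim i j).const_mul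
      lam).const_add _).sub_const P
  rw [add_sub_cancel_right] at hconv
  exact ge_of_tendsto' hconv hle

theorem OPTFull_le_OPTFin_add_tailEnergy (hnG : ∀ z, 0 ≤ normG z) (hlam : 0 ≤ lam)
    (hmu : ∀ j, 0 ≤ mu j) (hsum : ∀ i, Summable fun ξ : I => ((d ξ : ℝ)) ^ 2 * frobSq (y i ξ))
    (S : Finset I) : OPTFull normG lam mu y ≤ OPTFin normG lam mu y S + tailEnergy y S := by
  rw [← sub_le_iff_le_add]
  refine le_csInf ⟨_, fun _ _ => 0, fun _ _ _ => 0, rfl⟩ ?_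
  rintro _ ⟨φ, ℓ, rfl⟩
  exact sub_le_iff_le_add.2
    (OPTFull_le_objFin_add_tailEnergy normG lam mu y hnG hlam hmu hsum S φ ℓ)

end DecidableEq

end

/-- If `Ĥ_k ↑ Ĝ` is an increasing exhausting sequence of (finite) sets of irreducibles, then
`OPT-Ĥ_k` increases monotonically to `OPT-Ĝ`. -/
theorem stmt11 {I : Type*} [DecidableEq I] {d : I → ℕ} {n q : ℕ}
    (normG : Op I d → ℝ) (hnG : ∀ z, 0 ≤ normG z)
    (lam : ℝ) (hlam : 0 ≤ lam) (mu : Fin q → ℝ) (hmu : ∀ j, 0 ≤ mu j)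
    (y : Fin n → Op I d)
    (hsum : ∀ i, Summable fun ξ : I => ((d ξ : ℝ)) ^ 2 * frobSq (y i ξ))
    (Hk : ℕ → Finset I) (hmono : Monotone Hk) (hcover : ∀ ξ : I, ∃ k, ξ ∈ Hk k) :
    Monotone (fun k => OPTFin normG lam mu y (Hk k) : ℕ → ℝ) ∧
    Tendsto (fun k => OPTFin normG lam mu y (Hk k))
      atTop (𝓝 (OPTFull normG lam mu y)) := by
  refine ⟨fun k k' hkk' => OPTFin_mono normG lam mu y hnG hlam hmu (hmono hkk'), ?_⟩
  have htail : Tendsto (fun k => tailEnergy y (Hk k)) atTop (𝓝 0) :=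
    (tendsto_tailEnergy y hsum).comp (tendsto_atTop_finset_of_monotone hmono hcover)
  have hlower : Tendsto (fun k => OPTFull normG lam mu y - tailEnergy y (Hk k)) atTop
      (𝓝 (OPTFull normG lam mu y)) := by
    simpa only [sub_zero] using tendsto_const_nhds.sub htail
  refine tendsto_of_tendsto_of_tendsto_of_le_of_le hlower tendsto_const_nhds (fun k => ?_)
    fun k => OPTFin_le_OPTFull normG lam mu y hnG hlam hmu hsum (Hk k)
  exact sub_le_iff_le_add.2 (OPTFull_le_OPTFin_add_tailEnergy normG lam mu y hnG hlam hmu hsum _)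
end
end

section
/- Suppose the optimal dictionary Φ̂ of the full problem is canonically unique with modulus δ(ε) → 0 as ε → 0, and Ĥ_k ↑ Ĝ with OPT-Ĥ_k → OPT-Ĝ and OBJ-Ĥ_k → OPT-Ĝ. Then the dictionaries Φ̂^{Ĥ_k} learned on the truncations satisfy D(Φ̂^{Ĥ_k}, Φ̂) → 0 as k → ∞. -/
open Filter
open scoped Topology

theorem tendsto_zero_of_forall_eventually_le_modulus {ι : Type*} {l : Filter ι} {u : ι → ℝ}
    {δ : ℝ → ℝ} (hδ : Tendsto δ (𝓝[>] 0) (𝓝 0)) (hu : ∀ i, 0 ≤ u i)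
    (hle : ∀ ε > (0 : ℝ), ∀ᶠ i in l, u i ≤ δ ε) : Tendsto u l (𝓝 0) := by
  rw [tendsto_order]
  refine ⟨fun a ha => .of_forall fun i => ha.trans_le (hu i), fun η hη => ?_⟩
  obtain ⟨ε, hδε, hε⟩ := ((hδ.eventually (gt_mem_nhds hη)).and self_mem_nhdsWithin).exists
  exact (hle ε hε).mono fun i hi => hi.trans_lt hδε

theorem stmt12_general {Dict : Type*} (D : Dict → Dict → ℝ) (hD : ∀ a b, 0 ≤ D a b)
    (obj : Dict → ℝ) (OPT : ℝ)
    (Φstar : Dict) (δ : ℝ → ℝ)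
    (hδ : Tendsto δ (nhdsWithin 0 (Set.Ioi 0)) (𝓝 0))
    (huniq : ∀ ε > (0 : ℝ), ∀ Φ, obj Φ ≤ OPT + ε → D Φstar Φ ≤ δ ε)
    (Φk : ℕ → Dict)
    (hobj : Tendsto (fun k => obj (Φk k)) atTop (𝓝 OPT)) :
    Tendsto (fun k => D Φstar (Φk k)) atTop (𝓝 0) := by
  refine tendsto_zero_of_forall_eventually_le_modulus hδ (fun k => hD _ _) fun ε hε => ?_
  filter_upwards [hobj.eventually (eventually_le_nhds (lt_add_of_pos_right OPT hε))] with k hk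
  exact huniq ε hε _ hk

/-- If the optimal dictionary `Φ̂` of the full problem is canonically unique with modulus
`δ(ε) → 0`, and the dictionaries `Φ̂^{Ĥ_k}` learned on the truncations attain objective values
`OBJ-Ĥ_k → OPT-Ĝ` in the full problem, then `D(Φ̂^{Ĥ_k}, Φ̂) → 0`. -/
theorem stmt12 {Dict : Type*} (D : Dict → Dict → ℝ) (hD : ∀ a b, 0 ≤ D a b)
    (obj : Dict → ℝ) (OPT : ℝ) (hOPT : ∀ Φ, OPT ≤ obj Φ)
    (Φstar : Dict) (δ : ℝ → ℝ)
    (hδ : Tendsto δ (nhdsWithin 0 (Set.Ioi 0)) (𝓝 0))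
    (huniq : ∀ ε > (0 : ℝ), ∀ Φ, obj Φ ≤ OPT + ε → D Φstar Φ ≤ δ ε)
    (Φk : ℕ → Dict)
    (hobj : Tendsto (fun k => obj (Φk k)) atTop (𝓝 OPT)) :
    Tendsto (fun k => D Φstar (Φk k)) atTop (𝓝 0) :=
  stmt12_general D hD obj OPT Φstar δ hδ huniq Φk hobj
end
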